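/- arXiv:1609.03311 — 3 statements merged into one kernel-verified Lean document; each statement's English description precedes it below -/
import Mathlib

section
/- Let g be a nilpotent Lie algebra with lower central series g¹ = g, g^{k+1} = [g, g^k], and let ⟨·,·⟩ be an ad-invariant nondegenerate symmetric bilinear form on g. Then the subspace i(g) := Σ_{k≥0} (g^{k+1} ∩ (g^{k+1})^⊥) is an isotropic ideal of g. -/
/-- The canonical isotropic ideal `i(g) = Σ_k (g^{k+1} ∩ (g^{k+1})^⊥)` of a nilpotent
metric Lie algebra, as a submodule.  (Here `g^{k+1}` is the `k`-th term of the lower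
central series, `g¹ = g`.) -/
noncomputable def canonicalIsotropicIdeal (g : Type*) [LieRing g] [LieAlgebra ℝ g]
    (B : LinearMap.BilinForm ℝ g) : Submodule ℝ g :=
  ⨆ k : ℕ,
    ((LieModule.lowerCentralSeries ℝ g g k : Submodule ℝ g) ⊓
      B.orthogonal (LieModule.lowerCentralSeries ℝ g g k : Submodule ℝ g))

/-!
Each piece `g^{k+1} ∩ (g^{k+1})^⊥` is the intersection of two Lie ideals: `g^{k+1}` is one, and
the orthogonal complement of a Lie ideal is one because the form is invariant. Hence `i(g)` is a sum
of Lie ideals. It is isotropic because the lower central series is a chain: of two pieces, the one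
further down lies in the larger term of the series, to which the other is orthogonal.
-/

namespace LinearMap.BilinForm

section Orthogonal

variable {R M : Type*} [CommRing R] [AddCommGroup M] [Module R M] {B : LinearMap.BilinForm R M}

theorem le_orthogonal_comm (hB : B.IsRefl) {N N' : Submodule R M}
    (h : N ≤ B.orthogonal N') : N' ≤ B.orthogonal N :=
  fun _ hx _ hy ↦ hB _ _ (h hy _ hx)

theorem iSup_inf_orthogonal_le_orthogonal {ι : Type*} [LinearOrder ι] (hB : B.IsRefl)
    {N : ι → Submodule R M} (hN : Antitone N) :
    ⨆ k, N k ⊓ B.orthogonal (N k) ≤ B.orthogonal (⨆ k, N k ⊓ B.orthogonal (N k)) := by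
  have hpair : ∀ j k, N j ⊓ B.orthogonal (N j) ≤ B.orthogonal (N k ⊓ B.orthogonal (N k)) := by
    intro j k y hy x hx
    rcases le_total j k with hjk | hkj
    · exact hy.2 x (hN hjk hx.1)
    · exact hB _ _ (hx.2 y (hN hkj hy.1))
  refine iSup_le fun j ↦ le_orthogonal_comm hB (iSup_le fun k ↦ ?_)
  exact le_orthogonal_comm hB (hpair j k)

end Orthogonal

theorem lieInvariant_of_lie_left_eq_lie_right {R L : Type*} [CommRing R] [LieRing L]
    [LieAlgebra R L] {B : LinearMap.BilinForm R L}
    (hB : ∀ x y z : L, B ⁅x, y⁆ z = B x ⁅y, z⁆) : B.lieInvariant L := by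
  intro x y z
  rw [← hB, ← lie_skew, map_neg, LinearMap.neg_apply]

end LinearMap.BilinForm

theorem canonicalIsotropicIdeal_eq_iSup_inf_orthogonal (g : Type*) [LieRing g]
    [LieAlgebra ℝ g] {B : LinearMap.BilinForm ℝ g} (hB : B.lieInvariant g) :
    canonicalIsotropicIdeal g B =
      ((⨆ k, LieModule.lowerCentralSeries ℝ g g k ⊓
        LieAlgebra.InvariantForm.orthogonal B hB (LieModule.lowerCentralSeries ℝ g g k) :
          LieIdeal ℝ g) : Submodule ℝ g) := by
  simp only [canonicalIsotropicIdeal, LieIdeal.toLieSubalgebra_toSubmodule,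
    LieSubmodule.iSup_toSubmodule, LieSubmodule.inf_toSubmodule,
    LieAlgebra.InvariantForm.orthogonal_toSubmodule]

theorem canonicalIsotropicIdeal_isotropic_ideal_general
    {g : Type*} [LieRing g] [LieAlgebra ℝ g]
    (B : LinearMap.BilinForm ℝ g)
    (hBsymm : B.IsSymm)
    (hBinv : ∀ x y z : g, B ⁅x, y⁆ z = B x ⁅y, z⁆) :
    (∀ x ∈ canonicalIsotropicIdeal g B, ∀ y ∈ canonicalIsotropicIdeal g B, B x y = 0) ∧
    (∀ x : g, ∀ y ∈ canonicalIsotropicIdeal g B, ⁅x, y⁆ ∈ canonicalIsotropicIdeal g B) := by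
  have hisotropic := LinearMap.BilinForm.iSup_inf_orthogonal_le_orthogonal hBsymm.isRefl
    (LieModule.antitone_lowerCentralSeries ℝ g g)
  refine ⟨fun x hx y hy ↦ hisotropic hy x hx, fun x y hy ↦ ?_⟩
  have hBlie := LinearMap.BilinForm.lieInvariant_of_lie_left_eq_lie_right hBinv
  rw [canonicalIsotropicIdeal_eq_iSup_inf_orthogonal g hBlie] at hy ⊢
  exact LieSubmodule.lie_mem _ hy

/-- For a nilpotent Lie algebra `g` with ad-invariant nondegenerate
symmetric bilinear form `B`, the subspace `i(g) = Σ_k (g^{k+1} ∩ (g^{k+1})^⊥)` is an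
isotropic ideal of `g`. -/
theorem canonicalIsotropicIdeal_isotropic_ideal
    {g : Type*} [LieRing g] [LieAlgebra ℝ g] [LieRing.IsNilpotent g]
    (B : LinearMap.BilinForm ℝ g)
    (hBnd : B.Nondegenerate) (hBsymm : B.IsSymm)
    (hBinv : ∀ x y z : g, B ⁅x, y⁆ z = B x ⁅y, z⁆) :
    (∀ x ∈ canonicalIsotropicIdeal g B, ∀ y ∈ canonicalIsotropicIdeal g B, B x y = 0) ∧
    (∀ x : g, ∀ y ∈ canonicalIsotropicIdeal g B, ⁅x, y⁆ ∈ canonicalIsotropicIdeal g B) :=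
  canonicalIsotropicIdeal_isotropic_ideal_general B hBsymm hBinv
end

section
/- Let D_l be a bijective derivation of l = ℝ² (abelian) and (a, D_a) a finite-dimensional metric vector space with bijective skewsymmetric map D_a, viewed as a trivial (l,D_l)-module. Suppose α ∈ C²(l,a) satisfies D_s°α = 0 where D_s° is built from the semisimple parts of D_l and D_a. Then either α = 0 or the image α(l,l) is a one-dimensional isotropic subspace of a; in particular α(l,l) is degenerate whenever α ≠ 0. -/
/-!
Since `l` is two-dimensional, an alternating `α` is `det • w` with `w = α e₁ e₂`, so its image
spans `ℝ w`, and `D_s°α = 0` reads `D_{a,s} w = tr(D_{l,s}) • w`. Because `D_a - D_{a,s}` is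
nilpotent and commutes with `D_a`, an eigenvector of `D_{a,s}` for `t` lies in the generalized
eigenspace of `D_a` for `t`; injectivity of `D_a` forces `t ≠ 0`. Generalized eigenspaces of a
skew map for `s` and `t` with `s + t ≠ 0` are orthogonal, so taking `s = t` gives `B w w = 0`.
-/

theorem LinearMap.BilinForm.apply_eq_zero_of_mem_maxGenEigenspace
    {K M : Type*} [Field K] [AddCommGroup M] [Module K M]
    {B : LinearMap.BilinForm K M} {f : Module.End K M} (hf : ∀ u v, B (f u) v = -B u (f v))
    {s t : K} (hst : s + t ≠ 0) {x y : M}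
    (hx : x ∈ f.maxGenEigenspace s) (hy : y ∈ f.maxGenEigenspace t) : B x y = 0 := by
  set g := f - s • 1
  set h := f - t • 1
  have hsum : ∀ u v, (s + t) * B u v = -(B (g u) v + B u (h v)) := by
    intro u v
    simp only [g, h, LinearMap.sub_apply, LinearMap.smul_apply, Module.End.one_apply, map_sub,
      map_smul, smul_eq_mul, hf]
    ring
  suffices ∀ i x, (g ^ i) x = 0 → ∀ j y, (h ^ j) y = 0 → B x y = 0 by
    obtain ⟨i, hi⟩ := (f.mem_maxGenEigenspace s x).1 hx
    obtain ⟨j, hj⟩ := (f.mem_maxGenEigenspace t y).1 hy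
    exact this i x hi j y hj
  intro i
  induction i with
  | zero => intro x hx j y _; simp_all
  | succ i ihi =>
    intro x hx j
    induction j with
    | zero => intro y hy; simp_all
    | succ j ihj =>
      intro y hy
      have hgx : B (g x) y = 0 := ihi (g x) (by rwa [pow_succ] at hx) (j + 1) y hy
      have hhy : B x (h y) = 0 := ihj (h y) (by rwa [pow_succ] at hy)
      have hxy := hsum x y
      rw [hgx, hhy, add_zero, neg_zero] at hxy
      exact (mul_eq_zero.1 hxy).resolve_left hst

theorem Module.End.mem_maxGenEigenspace_of_apply_eq_smul
    {R M : Type*} [CommRing R] [AddCommGroup M] [Module R M]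
    {f g : Module.End R M} (hfg : Commute f g) (hn : IsNilpotent (f - g)) {μ : R} {x : M}
    (hx : g x = μ • x) : x ∈ f.maxGenEigenspace μ := by
  obtain ⟨k, hk⟩ := hn
  refine (f.mem_maxGenEigenspace μ x).2 ⟨k, ?_⟩
  -- `f - g` preserves the `μ`-eigenspace of `g`, on which `f - μ • 1` agrees with `f - g`.
  suffices ∀ k x, g x = μ • x → ((f - μ • 1) ^ k) x = ((f - g) ^ k) x by
    rw [this k x hx, hk, LinearMap.zero_apply]
  intro k
  induction k with
  | zero => intro x _; rfl
  | succ k ih =>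
    intro x hx
    have hgfx : g ((f - g) x) = μ • (f - g) x := by
      rw [← Module.End.mul_apply, (hfg.symm.sub_right (Commute.refl g)).eq, Module.End.mul_apply,
        hx, map_smul]
    rw [pow_succ, pow_succ, Module.End.mul_apply, Module.End.mul_apply, ← ih _ hgfx]
    congr 1
    simp [hx]

section AlternatingFinTwo

variable {R l a : Type*} [CommRing R] [AddCommGroup l] [Module R l] [AddCommGroup a] [Module R a]
  (b : Module.Basis (Fin 2) R l) (α : l →ₗ[R] l →ₗ[R] a)

theorem LinearMap.apply_eq_basis_det_smul (hα : ∀ x, α x x = 0) (x y : l) :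
    α x y = b.det ![x, y] • α (b 0) (b 1) := by
  have hanti : α (b 1) (b 0) = -α (b 0) (b 1) := by
    have := hα (b 0 + b 1)
    simp only [map_add, LinearMap.add_apply, hα, zero_add, add_zero] at this
    exact eq_neg_of_add_eq_zero_left this
  rw [b.det_apply, Matrix.det_fin_two]
  conv_lhs => rw [← b.sum_repr x, ← b.sum_repr y]
  simp only [Fin.sum_univ_two, map_add, map_smul, LinearMap.add_apply, LinearMap.smul_apply, hα,
    hanti, Module.Basis.toMatrix_apply, Matrix.cons_val_zero, Matrix.cons_val_one]
  module

theorem LinearMap.apply_map_add_apply_map_eq_trace_smul (hα : ∀ x, α x x = 0)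
    (f : Module.End R l) :
    α (f (b 0)) (b 1) + α (b 0) (f (b 1)) = LinearMap.trace R l f • α (b 0) (b 1) := by
  rw [α.apply_eq_basis_det_smul b hα (f (b 0)), α.apply_eq_basis_det_smul b hα _ (f (b 1)),
    ← add_smul, LinearMap.trace_eq_matrix_trace R b, Matrix.trace_fin_two]
  simp [b.det_apply, Matrix.det_fin_two, LinearMap.toMatrix_apply, Module.Basis.toMatrix_apply]

theorem LinearMap.span_range₂_eq_span_singleton (hα : ∀ x, α x x = 0) :
    Submodule.span R {z : a | ∃ x y : l, α x y = z} = R ∙ α (b 0) (b 1) := by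
  refine le_antisymm (Submodule.span_le.2 ?_) (Submodule.span_mono ?_)
  · rintro _ ⟨x, y, rfl⟩
    exact Submodule.mem_span_singleton.2 ⟨_, (α.apply_eq_basis_det_smul b hα x y).symm⟩
  · exact Set.singleton_subset_iff.2 ⟨b 0, b 1, rfl⟩

end AlternatingFinTwo

theorem dim_two_no_balanced_alpha_general
    {l a : Type*} [AddCommGroup l] [Module ℝ l] [FiniteDimensional ℝ l]
    [AddCommGroup a] [Module ℝ a]
    (hl2 : Module.finrank ℝ l = 2)
    (B : LinearMap.BilinForm ℝ a)
    (Dls : Module.End ℝ l) (Da Das : Module.End ℝ a)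
    (hDabij : Function.Bijective Da)
    (hDaskew : ∀ u v : a, B (Da u) v = - B u (Da v))
    (hDanil : IsNilpotent (Da - Das)) (hDac : Commute Da Das)
    (α : l →ₗ[ℝ] l →ₗ[ℝ] a) (hαalt : ∀ x : l, α x x = 0)
    (hDs : ∀ x y : l, Das (α x y) - α (Dls x) y - α x (Dls y) = 0) :
    (α = 0 ∨
      (Module.finrank ℝ (Submodule.span ℝ {z : a | ∃ x y : l, α x y = z}) = 1 ∧
        ∀ u ∈ Submodule.span ℝ {z : a | ∃ x y : l, α x y = z},
          ∀ v ∈ Submodule.span ℝ {z : a | ∃ x y : l, α x y = z}, B u v = 0)) ∧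
    (α ≠ 0 →
      ∃ u ∈ Submodule.span ℝ {z : a | ∃ x y : l, α x y = z}, u ≠ 0 ∧
        ∀ v ∈ Submodule.span ℝ {z : a | ∃ x y : l, α x y = z}, B u v = 0) := by
  let b := Module.finBasisOfFinrankEq ℝ l hl2
  set w := α (b 0) (b 1)
  have hrep : ∀ x y, α x y = b.det ![x, y] • w := α.apply_eq_basis_det_smul b hαalt
  rw [α.span_range₂_eq_span_singleton b hαalt]
  by_cases hw : w = 0
  · have hα : α = 0 := by
      ext x y
      rw [hrep, hw, smul_zero, LinearMap.zero_apply, LinearMap.zero_apply]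
    exact ⟨Or.inl hα, fun h => (h hα).elim⟩
  set t := LinearMap.trace ℝ l Dls
  have hDasw : Das w = t • w := by
    rw [← α.apply_map_add_apply_map_eq_trace_smul b hαalt, ← sub_eq_zero, ← sub_sub]
    exact hDs (b 0) (b 1)
  have hwt : w ∈ Da.maxGenEigenspace t :=
    Module.End.mem_maxGenEigenspace_of_apply_eq_smul hDac hDanil hDasw
  have ht : t ≠ 0 := by
    rintro ht
    obtain ⟨k, hk⟩ := (Da.mem_maxGenEigenspace t w).1 hwt
    rw [ht, zero_smul, sub_zero] at hk
    have hinj : Function.Injective (Da ^ k) := by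
      rw [Module.End.coe_pow]
      exact hDabij.1.iterate k
    exact hw ((injective_iff_map_eq_zero _).1 hinj w hk)
  have hww : B w w = 0 :=
    B.apply_eq_zero_of_mem_maxGenEigenspace hDaskew (by simpa [← two_mul]) hwt hwt
  have hiso : ∀ u ∈ ℝ ∙ w, ∀ v ∈ ℝ ∙ w, B u v = 0 := by
    rintro _ hu _ hv
    obtain ⟨c, rfl⟩ := Submodule.mem_span_singleton.1 hu
    obtain ⟨d, rfl⟩ := Submodule.mem_span_singleton.1 hv
    simp [hww]
  have hwmem := Submodule.mem_span_singleton_self (R := ℝ) w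
  exact ⟨Or.inr ⟨finrank_span_singleton hw, hiso⟩, fun _ => ⟨w, hwmem, hw, hiso w hwmem⟩⟩

/-- Let `D_l` be a bijective endomorphism (= derivation) of the
abelian Lie algebra `l = ℝ²` and `(a, B, D_a)` a finite-dimensional metric vector
space with a bijective skewsymmetric map `D_a`, viewed as a trivial module.  If the
alternating bilinear map `α ∈ C²(l, a)` satisfies `D_s°α = 0`, where `D_s°` is built
from the semisimple parts `D_{l,s}`, `D_{a,s}` of the Jordan decompositions, then
either `α = 0` or the image `α(l,l)` is a one-dimensional isotropic subspace of `a`;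
in particular `α(l,l)` is degenerate whenever `α ≠ 0`. -/
theorem dim_two_no_balanced_alpha
    {l a : Type*} [AddCommGroup l] [Module ℝ l] [FiniteDimensional ℝ l]
    [AddCommGroup a] [Module ℝ a] [FiniteDimensional ℝ a]
    (hl2 : Module.finrank ℝ l = 2)
    (B : LinearMap.BilinForm ℝ a) (hBnd : B.Nondegenerate) (hBsymm : B.IsSymm)
    (Dl Dls : Module.End ℝ l) (Da Das : Module.End ℝ a)
    (hDlbij : Function.Bijective Dl) (hDabij : Function.Bijective Da)
    (hDaskew : ∀ u v : a, B (Da u) v = - B u (Da v))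
    (hDlss : Dls.IsSemisimple) (hDlnil : IsNilpotent (Dl - Dls)) (hDlc : Commute Dl Dls)
    (hDass : Das.IsSemisimple) (hDanil : IsNilpotent (Da - Das)) (hDac : Commute Da Das)
    (α : l →ₗ[ℝ] l →ₗ[ℝ] a) (hαalt : ∀ x : l, α x x = 0)
    (hDs : ∀ x y : l, Das (α x y) - α (Dls x) y - α x (Dls y) = 0) :
    (α = 0 ∨
      (Module.finrank ℝ (Submodule.span ℝ {z : a | ∃ x y : l, α x y = z}) = 1 ∧
        ∀ u ∈ Submodule.span ℝ {z : a | ∃ x y : l, α x y = z},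
          ∀ v ∈ Submodule.span ℝ {z : a | ∃ x y : l, α x y = z}, B u v = 0)) ∧
    (α ≠ 0 →
      ∃ u ∈ Submodule.span ℝ {z : a | ∃ x y : l, α x y = z}, u ≠ 0 ∧
        ∀ v ∈ Submodule.span ℝ {z : a | ∃ x y : l, α x y = z}, B u v = 0) :=
  dim_two_no_balanced_alpha_general hl2 B Dls Da Das hDabij hDaskew hDanil hDac α hαalt hDs
end

section
/- Let h₃ be the 3-dimensional Heisenberg algebra ([e₁,e₂]=e₃), D_l a bijective derivation of h₃ with semisimple part D_{l,s}, and (a, ⟨·,·⟩, D_a) a metric vector space with bijective skewsymmetric D_a, viewed as a trivial module. If α ∈ C²(h₃,a) satisfies D_s°α = 0 (built from the semisimple parts), then the subspace α(h₃, z(h₃)) spanned by values α(L, Z) with Z in the center z(h₃) = ℝe₃ is totally isotropic: ⟨α(h₃,z(h₃)), α(h₃,z(h₃))⟩ = 0. -/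
/-!
Let `μ` be the eigenvalue of `D_l` on the center `ℝ e₂`; it is also the eigenvalue of `D_{l,s}`
there, it equals the trace of `D_l` (hence of `D_{l,s}`) on `h₃/z`, and `μ ≠ 0` since `D_l` is
bijective.  The map `S := α(·, e₂)` kills `e₂` and intertwines `E := D_{l,s} + μ` with `D_{a,s}`,
which is injective and, by uniqueness of the Jordan–Chevalley decomposition, skew.  Hence
`β(z, w) := ⟨S z, S w⟩` satisfies `β(E z, w) = -β(z, E w)`, and `β` only sees `E` modulo the
center, where `E² - t E + d = 0` by Cayley–Hamilton with `t = μ + 2μ ≠ 0`.  Comparing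
`β(E² z, w) = β(z, E² w)` with Cayley–Hamilton gives `2t β(E z, w) = 0`, and then `β = 0`: if
`d ≠ 0` by Cayley–Hamilton again, and if `d = 0` because `z - E z / t ∈ ker E ⊆ ker S`.
-/

open Module Polynomial LinearMap

theorem Module.End.mem_adjoin_of_isSemisimple_of_isNilpotent_sub {K V : Type*} [Field K]
    [PerfectField K] [AddCommGroup V] [Module K V] [FiniteDimensional K V] {f s : End K V}
    (hs : s.IsSemisimple) (hn : IsNilpotent (f - s)) (hc : Commute f s) :
    s ∈ Algebra.adjoin K {f} := by
  obtain ⟨n', hn', s', hs', hn'_nil, hs'_ss, hf⟩ := f.exists_isNilpotent_isSemisimple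
  have hc' : Commute n' s' := Algebra.commute_of_mem_adjoin_singleton_of_commute hs'
    (Algebra.commute_of_mem_adjoin_self hn').symm
  obtain ⟨-, rfl⟩ := isNilpotent_isSemisimple_unique hn'_nil hs'_ss hn hs hc'
    (hc.sub_left (Commute.refl s)) (by rw [← hf, sub_add_cancel])
  exact hs'

theorem IsUnit.of_isNilpotent_sub {R : Type*} [Ring R] {u s : R} (hu : IsUnit u)
    (hn : IsNilpotent (u - s)) (hc : Commute u s) : IsUnit s := by
  simpa using hn.neg.isUnit_add_right_of_commute hu ((Commute.refl u).sub_right hc).symm.neg_left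

namespace LinearMap.IsAdjointPair

variable {R M : Type*} [CommRing R] [AddCommGroup M] [Module R M] {B : LinearMap.BilinForm R M}
  {f g : Module.End R M}

theorem pow (h : IsAdjointPair B B f g) (n : ℕ) :
    IsAdjointPair B B ⇑(f ^ n) ⇑(g ^ n) := by
  induction n with
  | zero => exact isAdjointPair_one
  | succ n ih => rw [pow_succ', pow_succ]; exact h.mul ih

theorem aeval (h : IsAdjointPair B B f g) (p : R[X]) :
    IsAdjointPair B B ⇑(aeval f p) ⇑(aeval g p) := by
  induction p using Polynomial.induction_on' with
  | add p q hp hq => rw [map_add, map_add]; exact hp.add hq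
  | monomial n r =>
    simpa only [aeval_monomial, Algebra.algebraMap_eq_smul_one, smul_mul_assoc, one_mul,
        coe_smul]
      using (h.pow n).smul r

theorem neg (h : IsAdjointPair B B f g) : IsAdjointPair B B ⇑(-f) ⇑(-g) := fun x y => by
  simp [h x y]

theorem eq_zero (hB : B.SeparatingLeft) (h : IsAdjointPair B B f g) (hg : g = 0) : f = 0 :=
  ext fun x => hB _ fun y => by simp [h x y, hg]

theorem neg_of_isSemisimple_of_isNilpotent_sub {K M : Type*} [Field K]
    [PerfectField K] [AddCommGroup M] [Module K M] [FiniteDimensional K M]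
    {B : LinearMap.BilinForm K M} (hB : B.SeparatingLeft) {D S : Module.End K M}
    (hD : IsAdjointPair B B D ⇑(-D)) (hS : S.IsSemisimple) (hn : IsNilpotent (D - S))
    (hc : Commute D S) : IsAdjointPair B B S ⇑(-S) := by
  obtain ⟨p, hp : Polynomial.aeval D p = S⟩ : S ∈ (Polynomial.aeval (R := K) D).range := by
    rw [← Algebra.adjoin_singleton_eq_range_aeval]
    exact End.mem_adjoin_of_isSemisimple_of_isNilpotent_sub hS hn hc
  -- `T` is the `B`-adjoint of `S`, and `-T` turns out to be a semisimple part of `D` as well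
  set T := Polynomial.aeval (-D) p
  have hST : IsAdjointPair B B S T := by rw [← hp]; exact hD.aeval p
  have hTS : IsAdjointPair B B T S := by
    rw [← hp]
    exact (show IsAdjointPair B B ⇑(-D) D by simpa using hD.neg).aeval p
  have hT : T.IsSemisimple :=
    End.isSemisimple_of_squarefree_aeval_eq_zero hS.minpoly_squarefree
      ((hTS.aeval (minpoly K S)).eq_zero hB (minpoly.aeval K S))
  have hDT : Commute D T := show D * T = T * D by
    simpa using congrArg (Polynomial.aeval (-D)) (mul_comm X p)
  have hDTn : IsNilpotent (D + T) := by
    obtain ⟨m, hm⟩ := hn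
    refine ⟨m, ((show IsAdjointPair B B ⇑(D + T) ⇑(-D + S) from hD.add hTS).pow m).eq_zero hB ?_⟩
    rw [neg_add_eq_sub, ← neg_sub, neg_pow, hm, mul_zero]
  obtain ⟨-, hS_eq⟩ := End.isNilpotent_isSemisimple_unique hn hS hDTn (End.isSemisimple_neg.mpr hT)
    (hc.sub_left (Commute.refl S)) (hDT.add_left (Commute.refl T)).neg_right (by abel)
  rwa [← neg_eq_iff_eq_neg.mpr hS_eq] at hST

end LinearMap.IsAdjointPair

theorem LinearMap.BilinForm.apply_eq_zero_of_skew_intertwining {K V W : Type*} [Field K]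
    [NeZero (2 : K)] [AddCommGroup V] [Module K V] [AddCommGroup W] [Module K W]
    {B : LinearMap.BilinForm K W} {T : Module.End K W} {F : Module.End K V} {S : V →ₗ[K] W}
    {t d : K} (hT : IsAdjointPair B B T ⇑(-T)) (hTinj : Function.Injective T)
    (hTS : ∀ z, T (S z) = S (F z)) (hF : ∀ z, F (F z) - t • F z + d • z ∈ ker S) (ht : t ≠ 0)
    (z w : V) : B (S z) (S w) = 0 := by
  have hquad (z : V) : S (F (F z)) = t • S (F z) - d • S z := by
    have h := hF z
    rw [mem_ker, map_add, map_sub, map_smul, map_smul] at h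
    linear_combination (norm := module) h
  have hskew (z w : V) : B (S (F z)) (S w) = -B (S z) (S (F w)) := by
    rw [← hTS, ← hTS]
    simpa using hT (S z) (S w)
  have hrange (z w : V) : B (S (F z)) (S w) = 0 := by
    have h1 := hskew (F z) w
    have h2 := hskew z (F w)
    rw [hquad] at h1 h2
    simp only [map_sub, map_smul, LinearMap.sub_apply, LinearMap.smul_apply, smul_eq_mul] at h1 h2
    have h : (2 * t) * B (S (F z)) (S w) = 0 := by
      linear_combination h1 - h2 + t * hskew z w
    exact (mul_eq_zero.mp h).resolve_left (mul_ne_zero two_ne_zero ht)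
  rcases eq_or_ne d 0 with rfl | hd
  · -- `z - t⁻¹ • F z` lies in `ker F ⊆ ker S`
    have hz : S z = t⁻¹ • S (F z) := by
      refine sub_eq_zero.mp (hTinj ?_)
      rw [map_sub, map_smul, hTS, hTS, hquad, zero_smul, sub_zero, smul_smul, inv_mul_cancel₀ ht,
        one_smul, sub_self, map_zero]
    rw [hz, map_smul, smul_apply, hrange, smul_zero]
  · have h := hrange (F z) w
    rw [hquad] at h
    simp only [map_sub, map_smul, LinearMap.sub_apply, LinearMap.smul_apply, smul_eq_mul, hrange,
      mul_zero, zero_sub, neg_eq_zero] at h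
    exact (mul_eq_zero.mp h).resolve_left hd

namespace Module.Basis

variable {R V : Type*} [CommRing R] [AddCommGroup V] [Module R V] (e : Basis (Fin 3) R V)

theorem sum_repr_fin_three (v : V) :
    e.repr v 0 • e 0 + e.repr v 1 • e 1 + e.repr v 2 • e 2 = v := by
  rw [← Fin.sum_univ_three (fun i => e.repr v i • e i), e.sum_repr]

/-- The matrix, in the images of `e 0, e 1`, of the endomorphism that `F` induces on
`V ⧸ R ∙ e 2` when `F` preserves `R ∙ e 2`. -/
noncomputable def quotMatrix (F : Module.End R V) : Matrix (Fin 2) (Fin 2) R :=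
  (LinearMap.toMatrix e e F).submatrix Fin.castSucc Fin.castSucc

theorem quotMatrix_apply (F : Module.End R V) (i j : Fin 2) :
    e.quotMatrix F i j = e.repr (F (e j.castSucc)) i.castSucc := by
  simp [quotMatrix, LinearMap.toMatrix_apply]

theorem trace_quotMatrix_add_repr (F : Module.End R V) :
    (e.quotMatrix F).trace + e.repr (F (e 2)) 2 = LinearMap.trace R V F := by
  rw [LinearMap.trace_eq_matrix_trace R e, Matrix.trace_fin_three, Matrix.trace_fin_two]
  simp [quotMatrix_apply, LinearMap.toMatrix_apply]

theorem sq_sub_trace_add_det_mem_span {F : Module.End R V} (hF : F (e 2) ∈ R ∙ e 2) (z : V) :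
    F (F z) - (e.quotMatrix F).trace • F z + (e.quotMatrix F).det • z ∈ R ∙ e 2 := by
  let Φ : Module.End R V := F * F - (e.quotMatrix F).trace • F + (e.quotMatrix F).det • 1
  suffices h : ∀ i, Φ (e i) ∈ R ∙ e 2 by
    have hz : z ∈ Submodule.span R (Set.range e) := e.span_eq ▸ Submodule.mem_top
    exact (Submodule.span_le (p := (R ∙ e 2).comap Φ)).mpr (Set.range_subset_iff.mpr h) hz
  obtain ⟨r, hr⟩ := Submodule.mem_span_singleton.mp hF
  set m := fun i j => e.repr (F (e j)) i
  have hFe (j : Fin 3) : F (e j) = m 0 j • e 0 + m 1 j • e 1 + m 2 j • e 2 :=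
    (e.sum_repr_fin_three _).symm
  have hΦ (v : V) :
      Φ v = F (F v) - (m 0 0 + m 1 1) • F v + (m 0 0 * m 1 1 - m 0 1 * m 1 0) • v := by
    simp [Φ, Matrix.trace_fin_two, Matrix.det_fin_two, quotMatrix_apply, m]
  intro i
  rw [hΦ, Submodule.mem_span_singleton]
  fin_cases i
  · refine ⟨m 0 0 * m 2 0 + m 1 0 * m 2 1 + m 2 0 * r - (m 0 0 + m 1 1) * m 2 0, ?_⟩
    simp only [Fin.zero_eta]
    rw [hFe 0, map_add, map_add, map_smul, map_smul, map_smul, hFe 0, hFe 1, ← hr]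
    module
  · refine ⟨m 0 1 * m 2 0 + m 1 1 * m 2 1 + m 2 1 * r - (m 0 0 + m 1 1) * m 2 1, ?_⟩
    simp only [Fin.mk_one]
    rw [hFe 1, map_add, map_add, map_smul, map_smul, map_smul, hFe 0, hFe 1, ← hr]
    module
  · refine ⟨r * r - (m 0 0 + m 1 1) * r + (m 0 0 * m 1 1 - m 0 1 * m 1 0), ?_⟩
    simp only [Fin.reduceFinMk]
    rw [← hr, map_smul, ← hr]
    module

theorem trace_quotMatrix_add_smul_one (F : Module.End R V) (c : R) :
    (e.quotMatrix (F + c • 1)).trace = (e.quotMatrix F).trace + 2 * c := by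
  simp [Matrix.trace_fin_two, quotMatrix_apply]
  ring

theorem trace_quotMatrix_eq_of_isNilpotent_sub [IsReduced R] {F G : Module.End R V}
    (hn : IsNilpotent (F - G)) (h2 : e.repr (F (e 2)) 2 = e.repr (G (e 2)) 2) :
    (e.quotMatrix F).trace = (e.quotMatrix G).trace := by
  have h := (LinearMap.isNilpotent_trace_of_isNilpotent hn).eq_zero
  rw [map_sub, sub_eq_zero, ← e.trace_quotMatrix_add_repr, ← e.trace_quotMatrix_add_repr, h2] at h
  exact add_right_cancel h

end Module.Basis

section Heisenberg

variable {K L : Type*} [CommRing K] [LieRing L] [LieAlgebra K L]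

theorem heisenberg_mem_span_of_mem_center (e : Basis (Fin 3) K L) (he01 : ⁅e 0, e 1⁆ = e 2)
    (he02 : ⁅e 0, e 2⁆ = 0) (he12 : ⁅e 1, e 2⁆ = 0) {y : L} (hy : y ∈ LieAlgebra.center K L) :
    y ∈ K ∙ e 2 := by
  have hy' (x : L) : ⁅x, y⁆ = 0 := (LieModule.mem_maxTrivSubmodule K L L y).mp hy x
  have hsum := (e.sum_repr_fin_three y).symm
  have h0 : e.repr y 0 = 0 := by
    have h : ⁅e 1, y⁆ = -e.repr y 0 • e 2 := by
      conv_lhs => rw [hsum]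
      simp [← lie_skew (e 1) (e 0), he01, he12]
    simpa [hy'] using congrArg (fun v => e.repr v 2) h
  have h1 : e.repr y 1 = 0 := by
    have h : ⁅e 0, y⁆ = e.repr y 1 • e 2 := by
      conv_lhs => rw [hsum]
      simp [he01, he02]
    simpa [hy', eq_comm] using congrArg (fun v => e.repr v 2) h
  rw [hsum, h0, h1, zero_smul, zero_smul, zero_add, zero_add]
  exact Submodule.smul_mem _ _ (Submodule.mem_span_singleton_self _)

theorem heisenberg_derivation_apply (e : Basis (Fin 3) K L) (he01 : ⁅e 0, e 1⁆ = e 2)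
    (he02 : ⁅e 0, e 2⁆ = 0) (he12 : ⁅e 1, e 2⁆ = 0) {D : Module.End K L}
    (hD : ∀ x y, D ⁅x, y⁆ = ⁅D x, y⁆ + ⁅x, D y⁆) :
    D (e 2) = (e.quotMatrix D).trace • e 2 := by
  rw [← he01, hD, Matrix.trace_fin_two, he01]
  conv_lhs => rw [← e.sum_repr_fin_three (D (e 0)), ← e.sum_repr_fin_three (D (e 1))]
  simp [Basis.quotMatrix_apply, ← lie_skew (e 2) (e 1), he01, he02, he12, add_smul]
end Heisenberg

theorem heisenberg_alpha_center_isotropic_general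
    {g a : Type*} [LieRing g] [LieAlgebra ℝ g]
    [AddCommGroup a] [Module ℝ a] [FiniteDimensional ℝ a]
    (e : Module.Basis (Fin 3) ℝ g)
    (he01 : ⁅e 0, e 1⁆ = e 2) (he02 : ⁅e 0, e 2⁆ = 0) (he12 : ⁅e 1, e 2⁆ = 0)
    (B : LinearMap.BilinForm ℝ a) (hBnd : B.Nondegenerate)
    (Dl Dls : Module.End ℝ g) (Da Das : Module.End ℝ a)
    (hDlbij : Function.Bijective Dl)
    (hDlder : ∀ x y : g, Dl ⁅x, y⁆ = ⁅Dl x, y⁆ + ⁅x, Dl y⁆)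
    (hDabij : Function.Bijective Da)
    (hDaskew : ∀ u v : a, B (Da u) v = - B u (Da v))
    (hDlss : Dls.IsSemisimple) (hDlnil : IsNilpotent (Dl - Dls)) (hDlc : Commute Dl Dls)
    (hDass : Das.IsSemisimple) (hDanil : IsNilpotent (Da - Das)) (hDac : Commute Da Das)
    (α : g →ₗ[ℝ] g →ₗ[ℝ] a) (hαalt : ∀ x : g, α x x = 0)
    (hDs : ∀ x y : g, Das (α x y) - α (Dls x) y - α x (Dls y) = 0) :
    ∀ x u : g, ∀ y ∈ LieAlgebra.center ℝ g, ∀ v ∈ LieAlgebra.center ℝ g,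
      B (α x y) (α u v) = 0 := by
  intro x u y hy v hv
  obtain ⟨r, rfl⟩ :=
    Submodule.mem_span_singleton.mp (heisenberg_mem_span_of_mem_center e he01 he02 he12 hy)
  obtain ⟨s, rfl⟩ :=
    Submodule.mem_span_singleton.mp (heisenberg_mem_span_of_mem_center e he01 he02 he12 hv)
  suffices B (α x (e 2)) (α u (e 2)) = 0 by simp [this]
  set μ := (e.quotMatrix Dl).trace
  have hDl : Dl (e 2) = μ • e 2 := heisenberg_derivation_apply e he01 he02 he12 hDlder
  have hμ : μ ≠ 0 := fun h => e.ne_zero 2 (hDlbij.injective (by rw [hDl, h, zero_smul, map_zero]))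
  have hDls : Dls (e 2) = μ • e 2 :=
    End.apply_eq_of_mem_of_comm_of_isFinitelySemisimple_of_isNil
      (End.mem_eigenspace_iff.mpr hDl) hDlc hDlss.isFinitelySemisimple hDlnil
  have hDas : IsAdjointPair B B Das ⇑(-Das) :=
    IsAdjointPair.neg_of_isSemisimple_of_isNilpotent_sub hBnd.1
      (fun u v => by simpa using hDaskew u v) hDass hDanil hDac
  have hDasinj : Function.Injective Das := ((End.isUnit_iff Das).mp <|
    ((End.isUnit_iff Da).mpr hDabij).of_isNilpotent_sub hDanil hDac).injective
  set E := Dls + μ • 1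
  have hE : E (e 2) ∈ ℝ ∙ e 2 := Submodule.mem_span_singleton.mpr ⟨2 * μ, by
    simp only [E, LinearMap.add_apply, LinearMap.smul_apply, End.one_apply, hDls]
    module⟩
  have htE : (e.quotMatrix E).trace = 3 * μ := by
    rw [e.trace_quotMatrix_add_smul_one,
      ← e.trace_quotMatrix_eq_of_isNilpotent_sub hDlnil (by rw [hDl, hDls])]
    ring
  refine BilinForm.apply_eq_zero_of_skew_intertwining (S := α.flip (e 2)) (F := E) hDas hDasinj
    (fun z => ?_) (fun z => (Submodule.span_singleton_le_iff_mem _ _).mpr (hαalt (e 2))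
      (e.sq_sub_trace_add_det_mem_span hE z)) (htE ▸ by positivity) x u
  have h := hDs z (e 2)
  rw [hDls, map_smul] at h
  simp only [LinearMap.flip_apply, E, LinearMap.add_apply, LinearMap.smul_apply, End.one_apply,
    map_add, map_smul]
  linear_combination (norm := module) h

/-- Let `h₃` be the 3-dimensional Heisenberg algebra (with basis
`e₀, e₁, e₂` satisfying `⁅e₀,e₁⁆ = e₂`, `⁅e₀,e₂⁆ = ⁅e₁,e₂⁆ = 0`), `D_l` a bijective
derivation of `h₃` with semisimple part `D_{l,s}`, and `(a, B, D_a)` a metric vector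
space with a bijective skewsymmetric `D_a` (semisimple part `D_{a,s}`), viewed as a
trivial module.  If the alternating bilinear map `α ∈ C²(h₃, a)` satisfies
`D_s°α = 0`, then the subspace `α(h₃, z(h₃))` of values on the center is totally
isotropic: `⟨α(h₃, z(h₃)), α(h₃, z(h₃))⟩ = 0`. -/
theorem heisenberg_alpha_center_isotropic
    {g a : Type*} [LieRing g] [LieAlgebra ℝ g] [FiniteDimensional ℝ g]
    [AddCommGroup a] [Module ℝ a] [FiniteDimensional ℝ a]
    (e : Module.Basis (Fin 3) ℝ g)
    (he01 : ⁅e 0, e 1⁆ = e 2) (he02 : ⁅e 0, e 2⁆ = 0) (he12 : ⁅e 1, e 2⁆ = 0)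
    (B : LinearMap.BilinForm ℝ a) (hBnd : B.Nondegenerate) (hBsymm : B.IsSymm)
    (Dl Dls : Module.End ℝ g) (Da Das : Module.End ℝ a)
    (hDlbij : Function.Bijective Dl)
    (hDlder : ∀ x y : g, Dl ⁅x, y⁆ = ⁅Dl x, y⁆ + ⁅x, Dl y⁆)
    (hDabij : Function.Bijective Da)
    (hDaskew : ∀ u v : a, B (Da u) v = - B u (Da v))
    (hDlss : Dls.IsSemisimple) (hDlnil : IsNilpotent (Dl - Dls)) (hDlc : Commute Dl Dls)
    (hDass : Das.IsSemisimple) (hDanil : IsNilpotent (Da - Das)) (hDac : Commute Da Das)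
    (α : g →ₗ[ℝ] g →ₗ[ℝ] a) (hαalt : ∀ x : g, α x x = 0)
    (hDs : ∀ x y : g, Das (α x y) - α (Dls x) y - α x (Dls y) = 0) :
    ∀ x u : g, ∀ y ∈ LieAlgebra.center ℝ g, ∀ v ∈ LieAlgebra.center ℝ g,
      B (α x y) (α u v) = 0 :=
  heisenberg_alpha_center_isotropic_general e he01 he02 he12 B hBnd Dl Dls Da Das hDlbij hDlder
    hDabij hDaskew hDlss hDlnil hDlc hDass hDanil hDac α hαalt hDs
end
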